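/- arXiv:2505.24603 — 2 statements merged into one kernel-verified Lean document; each statement's English description precedes it below -/
import Mathlib

section
/- For every real γ > 5/2 and every α with 1 < α < 2γ/5, the following inequality holds: α(α − 1) − αγ² log(1 − 1/γ) + γ² log(1 − α/γ) ≥ 0. Equivalently, for every k > 0, φ(α; k, γ) ≤ kα/(2γ²) for all α ∈ (1, 2γ/5) whenever γ > 5/2. -/
/-- The privacy curve `φ(α; k, ζ)`. -/
noncomputable def phi (α k ζ : ℝ) : ℝ :=
  k * α / (2 * (α - 1)) * Real.log (1 - 1 / ζ)
    - k / (2 * (α - 1)) * Real.log (1 - α / ζ)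

private lemma aux_pow (α : ℝ) (hα : 1 ≤ α) : ∀ n : ℕ, α ^ (n + 1) - 1 ≤ (α - 1) * (n + 1) * α ^ n := by
  intro n
  induction n with
  | zero => simp
  | succ m ih =>
    have hαpow : (1:ℝ) ≤ α ^ (m+1) := one_le_pow₀ hα
    have h1 : α ^ (m + 2) - 1 = α * (α ^ (m+1) - 1) + (α - 1) := by ring
    have h2 : α * (α ^ (m+1) - 1) ≤ α * ((α - 1) * (m + 1) * α ^ m) :=
      mul_le_mul_of_nonneg_left ih (by linarith)
    have h3 : α * ((α - 1) * (m + 1) * α ^ m) = (α - 1) * (m + 1) * α ^ (m+1) := by ring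
    have h4 : (α - 1) * (m + 1) * α ^ (m+1) + (α - 1) ≤ (α - 1) * (m + 1 + 1) * α ^ (m+1) := by
      have : (α - 1) * 1 ≤ (α - 1) * α ^ (m+1) :=
        mul_le_mul_of_nonneg_left hαpow (by linarith)
      nlinarith
    push_cast
    push_cast at h4
    nlinarith

set_option maxHeartbeats 1000000 in
/-- for `γ > 5/2` and `1 < α < 2γ/5`,
`α(α − 1) − αγ² log(1 − 1/γ) + γ² log(1 − α/γ) ≥ 0`; equivalently
`φ(α; k, γ) ≤ kα/(2γ²)` for every `k > 0`. -/
theorem phi_le_linear (γ α : ℝ) (hγ : 5 / 2 < γ) (hα : α ∈ Set.Ioo 1 (2 * γ / 5)) :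
    0 ≤ α * (α - 1) - α * γ ^ 2 * Real.log (1 - 1 / γ) + γ ^ 2 * Real.log (1 - α / γ) ∧
      ∀ k : ℝ, 0 < k → phi α k γ ≤ k * α / (2 * γ ^ 2) := by
  obtain ⟨hα1, hα2⟩ := hα
  have hγ0 : (0:ℝ) < γ := by linarith
  have hα0 : (0:ℝ) < α := by linarith
  have hαγ : α < γ := by linarith
  have hγα : (0:ℝ) < γ - α := by linarith
  -- series expansions
  have hu : |1/γ| < 1 := by
    rw [abs_of_pos (by positivity)]
    rw [div_lt_one hγ0]; linarith
  have hx : |α/γ| < 1 := by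
    rw [abs_of_pos (by positivity)]
    rw [div_lt_one hγ0]; linarith
  have h1 := (Real.hasSum_pow_div_log_of_abs_lt_one hu).mul_left (α * γ^2)
  have h2 := (Real.hasSum_pow_div_log_of_abs_lt_one hx).mul_left (γ^2)
  have key := h1.sub h2
  set f : ℕ → ℝ := fun n => α * γ^2 * ((1/γ) ^ (n+1) / (n+1)) - γ^2 * ((α/γ) ^ (n+1) / (n+1))
    with hf
  set T : ℝ := α * γ^2 * (-Real.log (1 - 1/γ)) - γ^2 * (-Real.log (1 - α/γ)) with hT
  have keyT : HasSum f T := key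
  clear_value T
  -- tail
  have htail : HasSum (fun n => f (n + 4)) (T - ∑ i ∈ Finset.range 4, f i) := by
    rw [hasSum_nat_add_iff 4]
    simpa using keyT
  -- geometric lower bound for the tail
  have hgeo : HasSum (fun n : ℕ => (-(α * (α-1) * (α/γ)^3)) * (α/γ)^n)
      ((-(α * (α-1) * (α/γ)^3)) * (1 - α/γ)⁻¹) := by
    exact (hasSum_geometric_of_lt_one (by positivity) (by rw [div_lt_one hγ0]; linarith)).mul_left _
  have hle : (-(α * (α-1) * (α/γ)^3)) * (1 - α/γ)⁻¹ ≤ T - ∑ i ∈ Finset.range 4, f i := by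
    refine hasSum_le (fun n => ?_) hgeo htail
    -- pointwise bound
    have haux := aux_pow α hα1.le (n + 3)
    have hγpow : (0:ℝ) < γ ^ (n+3) := by positivity
    have hfn : f (n + 4) = (α - α ^ (n+5)) / ((n+5) * γ ^ (n+3)) := by
      rw [hf]
      have hγne : γ ≠ 0 := ne_of_gt hγ0
      simp only [div_pow, one_pow]
      field_simp
      push_cast
      ring
    rw [hfn]
    rw [neg_mul, neg_le, ← neg_div]
    rw [div_le_iff₀ (by positivity)]
    have hγne : γ ≠ 0 := ne_of_gt hγ0
    have hexp : α * (α - 1) * (α / γ) ^ 3 * (α / γ) ^ n * ((↑n + 5) * γ ^ (n + 3))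
        = α * (α - 1) * ((n:ℝ) + 5) * α ^ (n+3) := by
      simp only [div_pow]
      field_simp
      ring
    rw [hexp]
    have h5 : α ^ ((n+3) + 1) - 1 ≤ (α - 1) * ((n:ℝ) + 3 + 1) * α ^ (n+3) := by
      have := aux_pow α hα1.le (n+3)
      push_cast at this ⊢
      convert this using 3 <;> push_cast <;> ring
    have h6 : (α - 1) * ((n:ℝ) + 3 + 1) * α ^ (n+3) ≤ (α - 1) * ((n:ℝ) + 5) * α ^ (n+3) := by
      have : (0:ℝ) ≤ (α - 1) * α ^ (n+3) :=
        mul_nonneg (by linarith) (by positivity)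
      nlinarith
    have h7 : α ^ (n+4) - 1 ≤ (α - 1) * ((n:ℝ) + 5) * α ^ (n+3) := by
      have : α ^ ((n+3)+1) = α ^ (n+4) := by ring_nf
      linarith [h5.trans h6, le_of_eq this]
    have : -(α - α ^ (n+5)) = α * (α ^ (n+4) - 1) := by ring
    rw [this]
    calc α * (α ^ (n+4) - 1) ≤ α * ((α - 1) * ((n:ℝ) + 5) * α ^ (n+3)) :=
          mul_le_mul_of_nonneg_left h7 hα0.le
      _ = α * (α - 1) * ((n:ℝ) + 5) * α ^ (n+3) := by ring
  -- explicit first four terms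
  have hsum4 : ∑ i ∈ Finset.range 4, f i
      = 0 + (-(α*(α-1)/2)) + (-(α*(α^2-1)/(3*γ))) + (-(α*(α^3-1)/(4*γ^2))) := by
    rw [hf]
    simp only [Finset.sum_range_succ, Finset.sum_range_zero]
    have hγne : γ ≠ 0 := ne_of_gt hγ0
    norm_num
    field_simp
    ring
  -- main estimate
  have hmain : 0 ≤ α * (α - 1) - α * γ ^ 2 * Real.log (1 - 1 / γ) + γ ^ 2 * Real.log (1 - α / γ) := by
    have hTeq : α * (α - 1) - α * γ ^ 2 * Real.log (1 - 1 / γ) + γ ^ 2 * Real.log (1 - α / γ)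
        = α * (α - 1) + T := by rw [hT]; ring
    rw [hTeq]
    have hgeoval : (-(α * (α-1) * (α/γ)^3)) * (1 - α/γ)⁻¹ = -(α*(α-1)*α^3/(γ^2*(γ-α))) := by
      have hγne : γ ≠ 0 := ne_of_gt hγ0
      have h1x : 1 - α/γ = (γ - α)/γ := by field_simp
      rw [h1x]
      field_simp
    rw [hgeoval, hsum4] at hle
    have hT_lb : T ≥ -(α*(α-1)/2) - α*(α^2-1)/(3*γ) - α*(α^3-1)/(4*γ^2)
        - α*(α-1)*α^3/(γ^2*(γ-α)) := by linarith [hle]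
    have hpoly : 0 ≤ α * (α - 1) + (-(α*(α-1)/2) - α*(α^2-1)/(3*γ) - α*(α^3-1)/(4*γ^2)
        - α*(α-1)*α^3/(γ^2*(γ-α))) := by
      have e1 : α*(α^2-1)/(3*γ) = α*(α-1)*(α+1)/(3*γ) := by ring
      have e2 : α*(α^3-1)/(4*γ^2) = α*(α-1)*(α^2+α+1)/(4*γ^2) := by ring
      rw [e1, e2]
      have hP : 0 ≤ 6*γ^2*(γ-α) - 4*(α+1)*γ*(γ-α) - 3*(α^2+α+1)*(γ-α) - 12*α^3 := by
        nlinarith [mul_pos (sub_pos.2 hα1) (by linarith : (0:ℝ) < 2*γ - 5*α),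
          sq_nonneg (α-1), sq_nonneg (2*γ-5*α),
          mul_pos (mul_pos (sub_pos.2 hα1) (sub_pos.2 hα1)) (by linarith : (0:ℝ) < 2*γ-5*α),
          sq_nonneg α,
          mul_nonneg (mul_nonneg (sub_pos.2 hα1).le (sub_pos.2 hα1).le)
            (by linarith : (0:ℝ) ≤ 2*γ-5*α)]
      have hfact : α * (α - 1) + (-(α*(α-1)/2) - α*(α-1)*(α+1)/(3*γ) - α*(α-1)*(α^2+α+1)/(4*γ^2)
          - α*(α-1)*α^3/(γ^2*(γ-α)))
          = (α*(α-1)/(12*γ^2*(γ-α))) *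
            (6*γ^2*(γ-α) - 4*(α+1)*γ*(γ-α) - 3*(α^2+α+1)*(γ-α) - 12*α^3) := by
        have hγne : γ ≠ 0 := ne_of_gt hγ0
        have hγαne : γ - α ≠ 0 := ne_of_gt hγα
        field_simp
        ring
      rw [hfact]
      have : 0 ≤ α*(α-1)/(12*γ^2*(γ-α)) := by
        apply div_nonneg
        · nlinarith
        · positivity
      exact mul_nonneg this hP
    linarith
  refine ⟨hmain, fun k hk => ?_⟩
  have hα1' : α - 1 ≠ 0 := sub_ne_zero.2 (ne_of_gt hα1)
  have hγne : γ ≠ 0 := ne_of_gt hγ0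
  have hkey : k * α / (2 * γ ^ 2) - phi α k γ
      = k / (2 * (α - 1) * γ ^ 2)
        * (α * (α - 1) - α * γ ^ 2 * Real.log (1 - 1 / γ) + γ ^ 2 * Real.log (1 - α / γ)) := by
    unfold phi
    field_simp
    ring
  have hcoef : 0 ≤ k / (2 * (α - 1) * γ ^ 2) := by
    apply div_nonneg hk.le
    have : 0 < α - 1 := by linarith
    positivity
  nlinarith [mul_nonneg hcoef hmain]
end

section
/- Let Σ ∈ ℝ^{d×d} be a symmetric positive definite matrix and x ∈ ℝ^d a vector with xᵀΣ⁻¹x < 1 (so that Σ − xxᵀ is positive definite). Then for every real α with 1 < α < 1/(xᵀΣ⁻¹x), the matrix αΣ⁻¹ + (1 − α)(Σ − xxᵀ)⁻¹ is positive definite. -/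
open Matrix

section Aux
variable {d : ℕ}

lemma vmv_mulVec (a b v : Fin d → ℝ) : vecMulVec a b *ᵥ v = (b ⬝ᵥ v) • a := by
  ext i
  simp only [mulVec, vecMulVec_apply, dotProduct, Pi.smul_apply, smul_eq_mul, Finset.sum_mul,
    Finset.mul_sum]
  exact Finset.sum_congr rfl fun k _ => by ring

lemma mul_vmv (M : Matrix (Fin d) (Fin d) ℝ) (a b : Fin d → ℝ) :
    M * vecMulVec a b = vecMulVec (M *ᵥ a) b := by
  ext i j
  simp only [mul_apply, vecMulVec_apply, mulVec, dotProduct, Finset.sum_mul]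
  exact Finset.sum_congr rfl fun k _ => by ring

lemma vmv_mul (M : Matrix (Fin d) (Fin d) ℝ) (a b : Fin d → ℝ) :
    vecMulVec a b * M = vecMulVec a (Mᵀ *ᵥ b) := by
  ext i j
  simp only [mul_apply, vecMulVec_apply, mulVec, transpose_apply, dotProduct, Finset.mul_sum]
  exact Finset.sum_congr rfl fun k _ => by ring

lemma vmv_herm (a : Fin d → ℝ) : (vecMulVec a a).IsHermitian := by
  ext i j
  simp [vecMulVec_apply, conjTranspose_apply, mul_comm]

lemma cs_aux {A : Matrix (Fin d) (Fin d) ℝ} (hA : A.PosSemidef) (u v : Fin d → ℝ) :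
    (u ⬝ᵥ A *ᵥ v) ^ 2 ≤ (u ⬝ᵥ A *ᵥ u) * (v ⬝ᵥ A *ᵥ v) := by
  have hsym : ∀ a b : Fin d → ℝ, a ⬝ᵥ A *ᵥ b = b ⬝ᵥ A *ᵥ a := by
    intro a b
    rw [dotProduct_mulVec, ← mulVec_transpose, show Aᵀ = A from hA.1, dotProduct_comm]
  have hq : ∀ t : ℝ, 0 ≤ (v ⬝ᵥ A *ᵥ v) * (t * t) + (2 * (u ⬝ᵥ A *ᵥ v)) * t + u ⬝ᵥ A *ᵥ u := by
    intro t
    have h := hA.dotProduct_mulVec_nonneg (u + t • v)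
    simp only [star_trivial, add_dotProduct, mulVec_add, mulVec_smul, dotProduct_add,
      dotProduct_smul, smul_dotProduct, smul_eq_mul] at h
    rw [hsym v u] at h
    nlinarith [h]
  have hd := discrim_le_zero hq
  rw [discrim] at hd
  nlinarith [hd]

end Aux

/-- if `Σ` is symmetric positive definite and `x` satisfies
`α · xᵀΣ⁻¹x < 1` for some `α > 1` (in particular `xᵀΣ⁻¹x < 1`, so `Σ − xxᵀ` is
positive definite), then `αΣ⁻¹ + (1 − α)(Σ − xxᵀ)⁻¹` is positive definite. -/
theorem posDef_combination {d : ℕ} (Sig : Matrix (Fin d) (Fin d) ℝ)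
    (hSig : Sig.PosDef) (x : Fin d → ℝ)
    (hx : x ⬝ᵥ (Sig⁻¹ *ᵥ x) < 1)
    (α : ℝ) (hα : 1 < α) (hαx : α * (x ⬝ᵥ (Sig⁻¹ *ᵥ x)) < 1) :
    (α • Sig⁻¹ + (1 - α) • (Sig - vecMulVec x x)⁻¹).PosDef := by
  set A := Sig⁻¹ with hAdef
  set y := A *ᵥ x with hy
  set s := x ⬝ᵥ y with hsdef
  have hA : A.PosDef := hSig.inv
  have hAT : Aᵀ = A := hA.1
  have hs0 : 0 ≤ s := by simpa using hA.posSemidef.dotProduct_mulVec_nonneg x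
  have hs1 : s < 1 := hx
  have hdet : IsUnit Sig.det := hSig.det_pos.ne'.isUnit
  have hSy : Sig *ᵥ y = x := by
    rw [hy, mulVec_mulVec, Matrix.mul_nonsing_inv _ hdet, one_mulVec]
  have hyx : y ⬝ᵥ x = s := dotProduct_comm y x
  have hne : (1 : ℝ) - s ≠ 0 := by linarith
  -- positive definiteness of B := Sig - x xᵀ
  have hB : (Sig - vecMulVec x x).PosDef := by
    refine PosDef.of_dotProduct_mulVec_pos (hSig.1.sub (vmv_herm x)) fun v hv => ?_
    have hcs := cs_aux hSig.posSemidef v y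
    have hq : 0 < v ⬝ᵥ Sig *ᵥ v := by simpa using hSig.dotProduct_mulVec_pos hv
    rw [hSy, hyx] at hcs
    have hvx : v ⬝ᵥ x = x ⬝ᵥ v := dotProduct_comm v x
    simp only [star_trivial, sub_mulVec, dotProduct_sub, vmv_mulVec, dotProduct_smul,
      smul_eq_mul]
    rw [← hvx]
    nlinarith [hcs, hq, mul_pos hq (show (0:ℝ) < 1 - s by linarith)]
  -- Sherman–Morrison
  have hBinv : (Sig - vecMulVec x x)⁻¹ = A + (1 - s)⁻¹ • vecMulVec y y := by
    apply inv_eq_right_inv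
    have hT2 : (vecMulVec y y)ᵀ = vecMulVec y y := vmv_herm y
    have hxy : vecMulVec x (s • y) = s • vecMulVec x y := by
      ext i j; simp [vecMulVec_apply]; ring
    rw [Matrix.sub_mul, Matrix.mul_add, Matrix.mul_add, Matrix.mul_smul, Matrix.mul_smul,
      mul_vmv, hSy, Matrix.mul_nonsing_inv _ hdet, vmv_mul, hAT, ← hy,
      vmv_mul, hT2, vmv_mulVec, hyx, hxy, smul_smul]
    have hc : (1 - s)⁻¹ * s = (1 - s)⁻¹ - 1 := by field_simp; ring
    rw [hc, sub_smul, one_smul]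
    abel
  rw [hBinv]
  set t : ℝ := (α - 1) * (1 - s)⁻¹ with htdef
  have hinv : (0:ℝ) < (1 - s)⁻¹ := inv_pos.mpr (by linarith)
  have ht : 0 < t := mul_pos (by linarith) hinv
  have hts1 : t * (1 - s) = α - 1 := by rw [htdef, mul_assoc, inv_mul_cancel₀ hne, mul_one]
  have hM : α • A + (1 - α) • (A + (1 - s)⁻¹ • vecMulVec y y) = A - t • vecMulVec y y := by
    ext i j
    simp only [Matrix.add_apply, Matrix.sub_apply, Matrix.smul_apply, Pi.smul_apply, smul_eq_mul, vecMulVec_apply,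
      htdef]
    have h1s : (1 : ℝ) - s ≠ 0 := hne
    field_simp
    ring
  rw [hM]
  have hH2 : (t • vecMulVec y y).IsHermitian := by
    ext i j; simp [conjTranspose_apply, vecMulVec_apply, mul_comm]
  refine PosDef.of_dotProduct_mulVec_pos (hA.1.sub hH2) fun v hv => ?_
  have hq : 0 < v ⬝ᵥ A *ᵥ v := by simpa using hA.dotProduct_mulVec_pos hv
  have hcs := cs_aux hA.posSemidef v x
  have h1 : v ⬝ᵥ A *ᵥ x = v ⬝ᵥ y := rfl
  have h2 : x ⬝ᵥ A *ᵥ x = s := rfl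
  rw [h1, h2] at hcs
  have h3 : y ⬝ᵥ v = v ⬝ᵥ y := dotProduct_comm y v
  have h7 : t * s < 1 := by nlinarith [hts1, hs0, hαx]
  simp only [star_trivial, sub_mulVec, dotProduct_sub, smul_mulVec, dotProduct_smul,
    vmv_mulVec, smul_eq_mul, h3]
  nlinarith [mul_le_mul_of_nonneg_left hcs ht.le, mul_pos hq (sub_pos.mpr h7)]
end
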